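/- arXiv:1202.0587 — 8 statements merged into one kernel-verified Lean document; each statement's English description precedes it below -/
import Mathlib

section
/- Let μ be a probability measure on [0,∞)^d, let u₊ ∈ [0,∞)^d be such that the integral ∫ exp(⟨u₊,y⟩) dμ(y) is finite, and let c_1 ≥ c_2 ≥ ⋯ ≥ c_N = 1 be real numbers with c_1 < ∫ exp(⟨u₊,y⟩) dμ(y). Then there exist real numbers 0 = ξ_N ≤ ξ_{N-1} ≤ ⋯ ≤ ξ_1 ≤ 1 such that ∫ exp(ξ_k ⟨u₊,y⟩) dμ(y) = c_k for every k = 1,…,N. In particular, setting u_k := ξ_k u₊ yields a decreasing sequence u_1 ≥ u_2 ≥ ⋯ ≥ u_N = 0 in [0,∞)^d with ∫ exp(⟨u_k,y⟩) dμ(y) = c_k for all k. -/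
open MeasureTheory

/-- Proposition 2.4(1) of the paper: fitting the initial term structure.  Given a
probability measure `μ` on the nonnegative orthant, a direction `u₊ ≥ 0` with
finite exponential moment, and decreasing target values `c_1 ≥ ⋯ ≥ c_N = 1` with
`c_1 < ∫ exp⟨u₊,y⟩ dμ`, there are `0 = ξ_N ≤ ⋯ ≤ ξ_1 ≤ 1` with
`∫ exp(ξ_k⟨u₊,y⟩) dμ = c_k`; in particular `u_k := ξ_k u₊` is a decreasing
sequence in `[0,∞)^d` with `∫ exp⟨u_k,y⟩ dμ = c_k`. -/
theorem fit_initial_term_structure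
    (d N : ℕ) (hN : 0 < N)
    (μ : Measure (Fin d → ℝ)) [IsProbabilityMeasure μ]
    (hsupp : μ {y | ¬ ∀ i, 0 ≤ y i} = 0)
    (uplus : Fin d → ℝ) (huplus : ∀ i, 0 ≤ uplus i)
    (hint : Integrable (fun y => Real.exp (∑ i, uplus i * y i)) μ)
    (c : Fin N → ℝ) (hc : Antitone c)
    (hcN : c ⟨N - 1, Nat.sub_lt hN one_pos⟩ = 1)
    (hc1 : c ⟨0, hN⟩ < ∫ y, Real.exp (∑ i, uplus i * y i) ∂μ) :
    ∃ ξ : Fin N → ℝ,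
      Antitone ξ ∧
      ξ ⟨N - 1, Nat.sub_lt hN one_pos⟩ = 0 ∧
      (∀ k, 0 ≤ ξ k ∧ ξ k ≤ 1) ∧
      (∀ k, ∫ y, Real.exp (ξ k * ∑ i, uplus i * y i) ∂μ = c k) ∧
      Antitone (fun k => ξ k • uplus) ∧
      (∀ k i, 0 ≤ (ξ k • uplus) i) ∧
      (∀ k, ∫ y, Real.exp (∑ i, (ξ k • uplus) i * y i) ∂μ = c k) := by
  classical
  set g : (Fin d → ℝ) → ℝ := fun y => ∑ i, uplus i * y i with hg
  have hg_cont : Continuous g := by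
    apply continuous_finset_sum
    intro i _
    exact (continuous_const.mul (continuous_apply i))
  -- a.e. nonnegativity of g
  have hae_pos : ∀ᵐ y ∂μ, ∀ i, 0 ≤ y i := by
    rw [MeasureTheory.ae_iff]
    exact hsupp
  have hae_g : ∀ᵐ y ∂μ, 0 ≤ g y := by
    filter_upwards [hae_pos] with y hy
    exact Finset.sum_nonneg fun i _ => mul_nonneg (huplus i) (hy i)
  -- the clamp function
  set cl : ℝ → ℝ := fun t => max 0 (min t 1) with hcl
  have hcl_cont : Continuous cl := continuous_const.max (continuous_id.min continuous_const)
  have hcl_mem : ∀ t, cl t ∈ Set.Icc (0:ℝ) 1 := by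
    intro t
    constructor
    · exact le_max_left _ _
    · exact max_le (by norm_num) (min_le_right _ _)
  have hcl_eq : ∀ t ∈ Set.Icc (0:ℝ) 1, cl t = t := by
    intro t ht
    simp only [hcl]
    rw [min_eq_left ht.2, max_eq_right ht.1]
  -- integrability of exp(s * g) for s ∈ [0,1]
  have hbound : ∀ s ∈ Set.Icc (0:ℝ) 1, ∀ᵐ y ∂μ,
      Real.exp (s * g y) ≤ Real.exp (g y) := by
    intro s hs
    filter_upwards [hae_g] with y hy
    exact Real.exp_le_exp.2 (by nlinarith [hs.1, hs.2])
  have hmeas : ∀ s : ℝ, AEStronglyMeasurable (fun y => Real.exp (s * g y)) μ :=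
    fun s => (Real.continuous_exp.comp (continuous_const.mul hg_cont)).aestronglyMeasurable
  have hInt : ∀ s ∈ Set.Icc (0:ℝ) 1, Integrable (fun y => Real.exp (s * g y)) μ := by
    intro s hs
    refine hint.mono' (hmeas s) ?_
    filter_upwards [hbound s hs] with y hy
    rwa [Real.norm_eq_abs, abs_of_pos (Real.exp_pos _)]
  -- the function φ
  set φ : ℝ → ℝ := fun t => ∫ y, Real.exp (cl t * g y) ∂μ with hφ
  have hφ_cont : Continuous φ := by
    apply MeasureTheory.continuous_of_dominated
      (bound := fun y => Real.exp (g y))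
    · intro t; exact hmeas (cl t)
    · intro t
      filter_upwards [hbound (cl t) (hcl_mem t)] with y hy
      rwa [Real.norm_eq_abs, abs_of_pos (Real.exp_pos _)]
    · exact hint
    · exact Filter.Eventually.of_forall fun y =>
        Real.continuous_exp.comp ((hcl_cont.mul continuous_const))
  -- monotonicity of φ on [0,1]
  have hφ_mono : ∀ s ∈ Set.Icc (0:ℝ) 1, ∀ t ∈ Set.Icc (0:ℝ) 1, s ≤ t → φ s ≤ φ t := by
    intro s hs t ht hst
    simp only [hφ, hcl_eq s hs, hcl_eq t ht]
    refine integral_mono_ae (hInt s hs) (hInt t ht) ?_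
    filter_upwards [hae_g] with y hy
    exact Real.exp_le_exp.2 (mul_le_mul_of_nonneg_right hst hy)
  -- endpoint values
  have hφ0 : φ 0 = 1 := by
    have : cl 0 = 0 := hcl_eq 0 (by norm_num)
    simp [hφ, this]
  have hφ1 : φ 1 = ∫ y, Real.exp (g y) ∂μ := by
    have : cl 1 = 1 := hcl_eq 1 (by norm_num)
    simp [hφ, this]
  -- each c k lies between φ 0 and φ 1
  have hlastk : ∀ k : Fin N, c ⟨N - 1, Nat.sub_lt hN one_pos⟩ ≤ c k := by
    intro k
    exact hc (by simp [Fin.le_def, Nat.le_sub_one_of_lt k.isLt])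
  have hk1 : ∀ k : Fin N, c k ≤ c ⟨0, hN⟩ := by
    intro k
    exact hc (by simp [Fin.le_def])
  have hck_mem : ∀ k : Fin N, c k ∈ Set.Icc (φ 0) (φ 1) := by
    intro k
    refine ⟨?_, ?_⟩
    · rw [hφ0]; rw [hcN] at hlastk; exact hlastk k
    · rw [hφ1]; exact le_of_lt (lt_of_le_of_lt (hk1 k) hc1)
  -- solution sets
  set S : Fin N → Set ℝ := fun k => Set.Icc (0:ℝ) 1 ∩ φ ⁻¹' {c k} with hS
  have hS_closed : ∀ k, IsClosed (S k) :=
    fun k => isClosed_Icc.inter (isClosed_singleton.preimage hφ_cont)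
  have hS_ne : ∀ k, (S k).Nonempty := by
    intro k
    obtain ⟨t, ht, hteq⟩ := intermediate_value_Icc (by norm_num : (0:ℝ) ≤ 1)
      hφ_cont.continuousOn (hck_mem k)
    exact ⟨t, ht, hteq⟩
  have hS_bdd : ∀ k, BddBelow (S k) := fun k => ⟨0, fun t ht => ht.1.1⟩
  set ξ : Fin N → ℝ := fun k => sInf (S k) with hξ
  have hξ_mem : ∀ k, ξ k ∈ S k := fun k => (hS_closed k).csInf_mem (hS_ne k) (hS_bdd k)
  have hξ_Icc : ∀ k, ξ k ∈ Set.Icc (0:ℝ) 1 := fun k => (hξ_mem k).1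
  have hξ_val : ∀ k, φ (ξ k) = c k := fun k => (hξ_mem k).2
  -- antitone
  have hξ_anti : Antitone ξ := by
    intro k j hkj
    by_contra h
    push_neg at h
    have hck : c j ≤ c k := hc hkj
    have h1 : φ (ξ k) ≤ φ (ξ j) := hφ_mono _ (hξ_Icc k) _ (hξ_Icc j) h.le
    have hceq : c k = c j := le_antisymm (by rwa [hξ_val, hξ_val] at h1) hck
    have hmem : ξ k ∈ S j := by
      refine ⟨hξ_Icc k, ?_⟩
      simp only [Set.mem_preimage, Set.mem_singleton_iff, hξ_val k, hceq]
    have := csInf_le (hS_bdd j) hmem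
    exact absurd this (not_le.2 h)
  -- ξ_N = 0
  have hξN : ξ ⟨N - 1, Nat.sub_lt hN one_pos⟩ = 0 := by
    have h0 : (0:ℝ) ∈ S ⟨N - 1, Nat.sub_lt hN one_pos⟩ := by
      constructor
      · exact ⟨le_refl _, by norm_num⟩
      · simp [hφ0, hcN]
    exact le_antisymm (csInf_le (hS_bdd _) h0) (le_csInf (hS_ne _) fun t ht => ht.1.1)
  -- integral values in the original form
  have hξ_int : ∀ k, ∫ y, Real.exp (ξ k * ∑ i, uplus i * y i) ∂μ = c k := by
    intro k
    have := hξ_val k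
    rw [hφ, ] at this
    simpa [hcl_eq _ (hξ_Icc k)] using this
  refine ⟨ξ, hξ_anti, hξN, fun k => ⟨(hξ_Icc k).1, (hξ_Icc k).2⟩, hξ_int, ?_, ?_, ?_⟩
  · intro k j hkj
    intro i
    simp only [Pi.smul_apply, smul_eq_mul]
    exact mul_le_mul_of_nonneg_right (hξ_anti hkj) (huplus i)
  · intro k i
    exact mul_nonneg (hξ_Icc k).1 (huplus i)
  · intro k
    have : ∀ y : Fin d → ℝ, ∑ i, (ξ k • uplus) i * y i = ξ k * ∑ i, uplus i * y i := by
      intro y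
      rw [Finset.mul_sum]
      refine Finset.sum_congr rfl fun i _ => ?_
      simp only [Pi.smul_apply, smul_eq_mul]
      ring
    simp only [this]
    exact hξ_int k
end

section
/- Let d ≥ 1, D = [0,∞)^d, I ⊆ ℝ^d, and suppose (μ_x)_{x∈D} is a family of probability measures on D with functions φ : I → ℝ, ψ : I → ℝ^d satisfying ∫_D exp(⟨w,y⟩) dμ_x(y) = exp(φ(w) + ⟨ψ(w), x⟩) for all w ∈ I, x ∈ D. Let u, v ∈ I with v ≤ u componentwise. Then for every x ∈ D, exp( φ(u) − φ(v) + ⟨ψ(u) − ψ(v), x⟩ ) ≥ 1. In particular, in the affine LIBOR model with a decreasing sequence u_1 ≥ ⋯ ≥ u_N = 0 of parameters, the forward price 1 + δ_k L(t,T_k) = exp( φ_{T_N−t}(u_k) − φ_{T_N−t}(u_{k+1}) + ⟨ψ_{T_N−t}(u_k) − ψ_{T_N−t}(u_{k+1}), X_t⟩ ) is ≥ 1 whenever X_t ∈ [0,∞)^d, i.e. LIBOR rates are non-negative. -/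
open MeasureTheory

/-- Proposition 2.5 of the paper: non-negativity of LIBOR rates.  In an affine
moment-generating representation, if `v ≤ u` componentwise then
`exp(φ(u) − φ(v) + ⟨ψ(u) − ψ(v), x⟩) ≥ 1` for every `x` in the nonnegative
orthant; in particular, if the forward price `1 + δ_k L(t,T_k)` equals this
exponential, the LIBOR rate `L(t,T_k)` is non-negative. -/
theorem affine_libor_rates_nonneg
    (d : ℕ) (hd : 1 ≤ d)
    (I : Set (Fin d → ℝ))
    (μ : (Fin d → ℝ) → Measure (Fin d → ℝ))
    (hprob : ∀ x : Fin d → ℝ, (∀ i, 0 ≤ x i) → IsProbabilityMeasure (μ x))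
    (hsupp : ∀ x : Fin d → ℝ, (∀ i, 0 ≤ x i) → μ x {y | ¬ ∀ i, 0 ≤ y i} = 0)
    (φ : (Fin d → ℝ) → ℝ) (ψ : (Fin d → ℝ) → (Fin d → ℝ))
    (haff : ∀ w ∈ I, ∀ x : Fin d → ℝ, (∀ i, 0 ≤ x i) →
      ∫ y, Real.exp (∑ i, w i * y i) ∂(μ x) = Real.exp (φ w + ∑ i, ψ w i * x i))
    (u v : Fin d → ℝ) (hu : u ∈ I) (hv : v ∈ I) (hvu : v ≤ u) :
    (∀ x : Fin d → ℝ, (∀ i, 0 ≤ x i) →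
      1 ≤ Real.exp (φ u - φ v + ∑ i, (ψ u i - ψ v i) * x i)) ∧
    (∀ x : Fin d → ℝ, (∀ i, 0 ≤ x i) → ∀ δ L : ℝ, 0 < δ →
      1 + δ * L = Real.exp (φ u - φ v + ∑ i, (ψ u i - ψ v i) * x i) →
      0 ≤ L) := by
  have key : ∀ x : Fin d → ℝ, (∀ i, 0 ≤ x i) →
      1 ≤ Real.exp (φ u - φ v + ∑ i, (ψ u i - ψ v i) * x i) := by
    intro x hx
    have hIu := haff u hu x hx
    have hIv := haff v hv x hx
    -- integrability
    have hintu : Integrable (fun y => Real.exp (∑ i, u i * y i)) (μ x) := by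
      by_contra h
      rw [integral_undef h] at hIu
      exact (Real.exp_pos _).ne' hIu.symm
    -- a.e. inequality
    have hae : ∀ᵐ y ∂(μ x), Real.exp (∑ i, v i * y i) ≤ Real.exp (∑ i, u i * y i) := by
      have hnull := hsupp x hx
      have : ∀ᵐ y ∂(μ x), ∀ i, 0 ≤ y i := by
        rw [ae_iff]
        simpa using hnull
      filter_upwards [this] with y hy
      exact Real.exp_le_exp.2 (Finset.sum_le_sum fun i _ =>
        mul_le_mul_of_nonneg_right (hvu i) (hy i))
    have hintv : Integrable (fun y => Real.exp (∑ i, v i * y i)) (μ x) := by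
      by_contra h
      rw [integral_undef h] at hIv
      exact (Real.exp_pos _).ne' hIv.symm
    have hle : ∫ y, Real.exp (∑ i, v i * y i) ∂(μ x)
        ≤ ∫ y, Real.exp (∑ i, u i * y i) ∂(μ x) :=
      integral_mono_ae hintv hintu hae
    rw [hIu, hIv, Real.exp_le_exp] at hle
    rw [show φ u - φ v + ∑ i, (ψ u i - ψ v i) * x i
        = (φ u + ∑ i, ψ u i * x i) - (φ v + ∑ i, ψ v i * x i) by
      simp [Finset.sum_sub_distrib, sub_mul]; ring]
    calc (1:ℝ) = Real.exp 0 := Real.exp_zero.symm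
    _ ≤ _ := Real.exp_le_exp.2 (by linarith)
  refine ⟨key, fun x hx δ L hδ heq => ?_⟩
  have := key x hx
  nlinarith
end

section
/- Let (Ω, ℱ, P) be a probability space with sub-σ-algebras ℱ_s ⊆ ℋ ⊆ ℱ. Let η : Ω → ℝ be a random variable independent of ℋ and exponentially distributed with rate 1, let Γ_s : Ω → [0,∞) be ℱ_s-measurable, and let D : Ω → (0,∞) be an ℋ-measurable integrable random variable with E_P[D] = 1. Define the probability measure Q := D · P. Then Q( Γ_s < η | ℱ_s ) = exp(−Γ_s) Q-almost surely. -/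
/-!
Because `η` is independent of `ℋ`, the joint law of `η` and any `ℋ`-measurable pair `(Γ, g)` is a
product, so Fubini gives `E_P[1_{Γ < η} g] = E_P[P(η > Γ) g]` for every `ℋ`-measurable `g ≥ 0`.
Since the density `D` is `ℋ`-measurable, taking `g = D 1_s` with `s ∈ ℱ_s` turns this into
`Q(s ∩ {Γ < η}) = E_Q[1_s P(η > Γ)]`, i.e. `Q(Γ < η | ℱ_s) = P(η > Γ)` evaluated at `Γ = Γ_s`;
for the unit exponential law this survival function is `exp(−Γ_s)`.
-/

open MeasureTheory ProbabilityTheory Set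
open scoped ENNReal

lemma expMeasure_real_Ioi {r x : ℝ} (hr : 0 < r) (hx : 0 ≤ x) :
    (expMeasure r).real (Ioi x) = Real.exp (-(r * x)) := by
  have := isProbabilityMeasure_expMeasure hr
  have hcompl := measureReal_add_measureReal_compl (μ := expMeasure r) (measurableSet_Iic (a := x))
  rw [compl_Iic, probReal_univ, ← cdf_eq_real, cdf_expMeasure_eq hr, if_pos hx] at hcompl
  linarith

lemma antitone_measure_Ioi (μ : Measure ℝ) : Antitone fun x => μ (Ioi x) :=
  fun _ _ h => measure_mono (Ioi_subset_Ioi h)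

lemma antitone_measureReal_Ioi (μ : Measure ℝ) [IsFiniteMeasure μ] :
    Antitone fun x => μ.real (Ioi x) :=
  fun _ _ h => measureReal_mono (Ioi_subset_Ioi h)

section

variable {Ω : Type*} {ms mH m0 : MeasurableSpace Ω} {P : Measure Ω} {η Γ : Ω → ℝ}

lemma setLIntegral_lt_of_indep [IsFiniteMeasure P] (hHm0 : mH ≤ m0) (hη : Measurable η)
    (hind : Indep (MeasurableSpace.comap η Real.measurableSpace) mH P)
    (hΓ : Measurable[mH] Γ) {g : Ω → ℝ≥0∞} (hg : Measurable[mH] g) :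
    ∫⁻ ω in {ω | Γ ω < η ω}, g ω ∂P = ∫⁻ ω, P.map η (Ioi (Γ ω)) * g ω ∂P := by
  set W : Ω → ℝ × ℝ≥0∞ := fun ω => (Γ ω, g ω)
  have hW_H : Measurable[mH] W := hΓ.prodMk hg
  have hW : Measurable W := hW_H.mono hHm0 le_rfl
  have hmap : P.map (fun ω => (η ω, W ω)) = (P.map η).prod (P.map W) :=
    (indepFun_iff_map_prod_eq_prod_map_map hη.aemeasurable hW.aemeasurable).mp <|
      (IndepFun_iff_Indep η W P).mpr (indep_of_indep_of_le_right hind hW_H.comap_le)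
  set F : ℝ × (ℝ × ℝ≥0∞) → ℝ≥0∞ := {p | p.2.1 < p.1}.indicator fun p => p.2.2
  have hF : Measurable F :=
    measurable_snd.snd.indicator (measurableSet_lt measurable_snd.fst measurable_fst)
  have hF_slice (w : ℝ × ℝ≥0∞) : (fun x => F (x, w)) = (Ioi w.1).indicator fun _ => w.2 := rfl
  calc ∫⁻ ω in {ω | Γ ω < η ω}, g ω ∂P = ∫⁻ ω, F (η ω, W ω) ∂P := by
        rw [← lintegral_indicator (measurableSet_lt (hΓ.mono hHm0 le_rfl) hη)]; rfl
    _ = ∫⁻ p, F p ∂(P.map η).prod (P.map W) := by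
        rw [← hmap, lintegral_map hF (hη.prodMk hW)]
    _ = ∫⁻ w, ∫⁻ x, F (x, w) ∂P.map η ∂P.map W := lintegral_prod_symm _ hF.aemeasurable
    _ = ∫⁻ w, P.map η (Ioi w.1) * w.2 ∂P.map W := by
        simp_rw [hF_slice, lintegral_indicator_const measurableSet_Ioi, mul_comm]
    _ = ∫⁻ ω, P.map η (Ioi (Γ ω)) * g ω ∂P :=
        lintegral_map (((antitone_measure_Ioi _).measurable.comp measurable_fst).mul
          measurable_snd) hW

lemma withDensity_inter_lt_of_indep [IsFiniteMeasure P] (hHm0 : mH ≤ m0) (hη : Measurable η)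
    (hind : Indep (MeasurableSpace.comap η Real.measurableSpace) mH P)
    (hΓ : Measurable[mH] Γ) {f : Ω → ℝ≥0∞} (hf : Measurable[mH] f)
    {s : Set Ω} (hs : MeasurableSet[mH] s) :
    P.withDensity f (s ∩ {ω | Γ ω < η ω}) = ∫⁻ ω in s, P.map η (Ioi (Γ ω)) ∂P.withDensity f := by
  have hs0 : MeasurableSet s := hHm0 s hs
  have hA : MeasurableSet {ω | Γ ω < η ω} := measurableSet_lt (hΓ.mono hHm0 le_rfl) hη
  have hsurv : Measurable fun ω => P.map η (Ioi (Γ ω)) :=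
    (antitone_measure_Ioi _).measurable.comp (hΓ.mono hHm0 le_rfl)
  rw [withDensity_apply _ (hs0.inter hA), ← Measure.restrict_restrict hs0,
    ← lintegral_indicator hs0, setLIntegral_lt_of_indep hHm0 hη hind hΓ (hf.indicator hs),
    setLIntegral_withDensity_eq_setLIntegral_mul _ (hf.mono hHm0 le_rfl) hsurv hs0,
    ← lintegral_indicator hs0]
  congr 1 with ω
  rw [mul_comm]
  exact (indicator_mul_left s f fun ω => P.map η (Ioi (Γ ω))).symm

theorem condExp_indicator_lt_withDensity_of_indep [IsFiniteMeasure P] (hsH : ms ≤ mH)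
    (hHm0 : mH ≤ m0) (hη : Measurable η)
    (hind : Indep (MeasurableSpace.comap η Real.measurableSpace) mH P)
    (hΓ : Measurable[ms] Γ) {f : Ω → ℝ≥0∞} (hf : Measurable[mH] f)
    [IsFiniteMeasure (P.withDensity f)] :
    (P.withDensity f)[{ω | Γ ω < η ω}.indicator (fun _ => (1 : ℝ)) | ms]
      =ᵐ[P.withDensity f] fun ω => (P.map η).real (Ioi (Γ ω)) := by
  have hms : ms ≤ m0 := hsH.trans hHm0
  have hA : MeasurableSet {ω | Γ ω < η ω} := measurableSet_lt (hΓ.mono hms le_rfl) hη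
  have hS : StronglyMeasurable[ms] fun ω => (P.map η).real (Ioi (Γ ω)) :=
    ((antitone_measureReal_Ioi _).measurable.comp hΓ).stronglyMeasurable
  have hS_int : Integrable (fun ω => (P.map η).real (Ioi (Γ ω))) (P.withDensity f) :=
    .of_bound (hS.mono hms).aestronglyMeasurable ((P.map η).real univ) <|
      .of_forall fun ω => by
        rw [Real.norm_of_nonneg measureReal_nonneg]; exact measureReal_mono (subset_univ _)
  refine (ae_eq_condExp_of_forall_setIntegral_eq hms ((integrable_const 1).indicator hA)
    (fun s _ _ => hS_int.integrableOn) (fun s hs _ => ?_) hS.aestronglyMeasurable).symm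
  rw [setIntegral_indicator hA, setIntegral_const, smul_eq_mul, mul_one, measureReal_def,
    withDensity_inter_lt_of_indep hHm0 hη hind (hΓ.mono hsH le_rfl) hf (hsH s hs),
    integral_eq_lintegral_of_nonneg_ae (.of_forall fun _ => measureReal_nonneg)
      (hS.mono hms).aestronglyMeasurable]
  congr 2 with ω
  exact ofReal_measureReal

end

theorem cox_conditional_survival_forward_measure_general
    {Ω : Type*} {m0 : MeasurableSpace Ω} (P : Measure Ω) [IsProbabilityMeasure P]
    (η : Ω → ℝ) (hη_meas : Measurable η)
    (hη_exp : P.map η = expMeasure 1)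
    (ms mH : MeasurableSpace Ω) (hsH : ms ≤ mH) (hHm0 : mH ≤ m0)
    (hη_indep : Indep (MeasurableSpace.comap η Real.measurableSpace) mH P)
    (Γs : Ω → ℝ) (hΓ_meas : Measurable[ms] Γs) (hΓ_nonneg : ∀ ω, 0 ≤ Γs ω)
    (D : Ω → ℝ) (hD_meas : Measurable[mH] D)
    (hD_int : Integrable D P)
    (Q : @Measure Ω m0) (hQ : Q = P.withDensity (fun ω => ENNReal.ofReal (D ω))) :
    Q[Set.indicator {ω | Γs ω < η ω} (fun _ => (1 : ℝ)) | ms]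
      =ᵐ[Q] fun ω => Real.exp (-Γs ω) := by
  have := isFiniteMeasure_withDensity_ofReal hD_int.2
  subst hQ
  filter_upwards [condExp_indicator_lt_withDensity_of_indep hsH hHm0 hη_meas hη_indep hΓ_meas
    (ENNReal.measurable_ofReal.comp hD_meas)] with ω hω
  rw [hω, hη_exp, expMeasure_real_Ioi one_pos (hΓ_nonneg ω), one_mul]

/-- Equation (3.7) of the paper: the conditional survival probability is the same
under any equivalent measure whose density is measurable with respect to a
σ-algebra `ℋ ⊇ ℱ_s` from which the exponential trigger `η` is independent:
`Q(Γ_s < η | ℱ_s) = exp(−Γ_s)` `Q`-a.s., where `Q = D·P`. -/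
theorem cox_conditional_survival_forward_measure
    {Ω : Type*} {m0 : MeasurableSpace Ω} (P : Measure Ω) [IsProbabilityMeasure P]
    (η : Ω → ℝ) (hη_meas : Measurable η)
    (hη_exp : P.map η = expMeasure 1)
    (ms mH : MeasurableSpace Ω) (hsH : ms ≤ mH) (hHm0 : mH ≤ m0)
    (hη_indep : Indep (MeasurableSpace.comap η Real.measurableSpace) mH P)
    (Γs : Ω → ℝ) (hΓ_meas : Measurable[ms] Γs) (hΓ_nonneg : ∀ ω, 0 ≤ Γs ω)
    (D : Ω → ℝ) (hD_meas : Measurable[mH] D) (hD_pos : ∀ ω, 0 < D ω)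
    (hD_int : Integrable D P) (hD_mean : ∫ ω, D ω ∂P = 1)
    (Q : @Measure Ω m0) (hQ : Q = P.withDensity (fun ω => ENNReal.ofReal (D ω))) :
    Q[Set.indicator {ω | Γs ω < η ω} (fun _ => (1 : ℝ)) | ms]
      =ᵐ[Q] fun ω => Real.exp (-Γs ω) :=
  cox_conditional_survival_forward_measure_general P η hη_meas hη_exp ms mH hsH hHm0 hη_indep Γs
    hΓ_meas hΓ_nonneg D hD_meas hD_int Q hQ
end

section
/- Let (Ω, ℱ, (ℱ_t)_{t≥0}, P) be a filtered probability space, let τ : Ω → [0,∞] be a random time, and for s ≥ 0 define 𝒟_s := σ( {τ ≤ u} : 0 ≤ u ≤ s ) and 𝒢_s := ℱ_s ∨ 𝒟_s. Let 0 ≤ s ≤ t, and let Y be an integrable ℱ-measurable random variable. Assume P(τ > s | ℱ_s) > 0 almost surely. Then E[ 1_{{τ > t}} Y | 𝒢_s ] = 1_{{τ > s}} · E[ 1_{{τ > t}} Y | ℱ_s ] / E[ 1_{{τ > s}} | ℱ_s ] almost surely. -/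
/-!
On `{τ > s}` every `𝒢_s`-measurable set coincides with an `ℱ_s`-measurable one, because the
generators `{τ ≤ u}`, `u ≤ s`, of `𝒟_s` do not meet `{τ > s}`. So, for functions vanishing off
`{τ > s}`, the defining identities of `E[· | 𝒢_s]` reduce to those of `E[· | ℱ_s]`. For the
candidate `Z = 1_{τ>s} N / D` with `N = E[1_{τ>t} Y | ℱ_s]` and `D = E[1_{τ>s} | ℱ_s]`, pulling
out the `ℱ_s`-measurable factor `N / D` gives `E[Z | ℱ_s] = N`. The factor `N / D` need not be
integrable, so the integrability of `Z` comes from the same pull-out for `ℝ≥0∞`-valued integrals.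
-/

open MeasureTheory
open scoped ENNReal

section

variable {Ω : Type*} {m m0 : MeasurableSpace Ω} {P : Measure Ω}

theorem lintegral_condLExp_mul (hm : m ≤ m0) [SigmaFinite (P.trim hm)] {X f : Ω → ℝ≥0∞}
    (hX : AEMeasurable X P) (hf : Measurable[m] f) :
    ∫⁻ ω, P⁻[X|m] ω * f ω ∂P = ∫⁻ ω, X ω * f ω ∂P := by
  have htrim : (P.withDensity P⁻[X|m]).trim hm = (P.withDensity X).trim hm := by
    refine @Measure.ext Ω m _ _ fun C hC => ?_
    rw [trim_measurableSet_eq hm hC, trim_measurableSet_eq hm hC, withDensity_apply _ (hm C hC),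
      withDensity_apply _ (hm C hC), setLIntegral_condLExp hm P X hC]
  have hf0 : AEMeasurable f P := (hf.mono hm le_rfl).aemeasurable
  calc ∫⁻ ω, P⁻[X|m] ω * f ω ∂P
      = ∫⁻ ω, f ω ∂(P.withDensity P⁻[X|m]).trim hm := by
        rw [lintegral_trim hm hf, lintegral_withDensity_eq_lintegral_mul₀
          (measurable_condLExp' m P X).aemeasurable hf0]; rfl
    _ = ∫⁻ ω, X ω * f ω ∂P := by
        rw [htrim, lintegral_trim hm hf, lintegral_withDensity_eq_lintegral_mul₀ hX hf0]; rfl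

theorem lintegral_ofReal_condExp_mul (hm : m ≤ m0) [SigmaFinite (P.trim hm)] {h : Ω → ℝ}
    (hh : Integrable h P) (hh_nonneg : 0 ≤ᵐ[P] h) {f : Ω → ℝ≥0∞} (hf : Measurable[m] f) :
    ∫⁻ ω, ENNReal.ofReal (P[h|m] ω) * f ω ∂P = ∫⁻ ω, ENNReal.ofReal (h ω) * f ω ∂P := by
  rw [← lintegral_condLExp_mul hm hh.1.aemeasurable.ennreal_ofReal hf]
  refine lintegral_congr_ae ?_
  filter_upwards [condLExp_ofReal m hh hh_nonneg] with ω hω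
  rw [hω]

theorem integrable_mul_div_condExp (hm : m ≤ m0) [SigmaFinite (P.trim hm)] {h N : Ω → ℝ}
    (hh : Integrable h P) (hh_nonneg : 0 ≤ᵐ[P] h) (hpos : ∀ᵐ ω ∂P, 0 < P[h|m] ω)
    (hN : StronglyMeasurable[m] N) (hN_int : Integrable N P) :
    Integrable (fun ω => h ω * N ω / P[h|m] ω) P := by
  have hD : StronglyMeasurable[m] P[h|m] := stronglyMeasurable_condExp
  set g : Ω → ℝ≥0∞ := fun ω => ‖N ω‖ₑ / ENNReal.ofReal (P[h|m] ω)
  have hg : Measurable[m] g := by fun_prop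
  have henorm : ∀ᵐ ω ∂P, ‖h ω * N ω / P[h|m] ω‖ₑ = ENNReal.ofReal (h ω) * g ω := by
    filter_upwards [hh_nonneg, hpos] with ω hω hDω
    rw [Real.enorm_eq_ofReal_abs, abs_div, abs_mul, abs_of_nonneg hω, abs_of_pos hDω,
      ENNReal.ofReal_div_of_pos hDω, ENNReal.ofReal_mul hω, ← Real.enorm_eq_ofReal_abs,
      mul_div_assoc]
  have hcancel : ∀ᵐ ω ∂P, ENNReal.ofReal (P[h|m] ω) * g ω = ‖N ω‖ₑ := by
    filter_upwards [hpos] with ω hDω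
    exact ENNReal.mul_div_cancel (ENNReal.ofReal_pos.2 hDω).ne' ENNReal.ofReal_ne_top
  refine ⟨(hh.1.mul (hN.mono hm).aestronglyMeasurable).div₀ (hD.mono hm).aestronglyMeasurable, ?_⟩
  calc ∫⁻ ω, ‖h ω * N ω / P[h|m] ω‖ₑ ∂P
      = ∫⁻ ω, ENNReal.ofReal (h ω) * g ω ∂P := lintegral_congr_ae henorm
    _ = ∫⁻ ω, ENNReal.ofReal (P[h|m] ω) * g ω ∂P :=
        (lintegral_ofReal_condExp_mul hm hh hh_nonneg hg).symm
    _ = ∫⁻ ω, ‖N ω‖ₑ ∂P := lintegral_congr_ae hcancel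
    _ < ∞ := hN_int.2

theorem condExp_mul_div_condExp (hm : m ≤ m0) [SigmaFinite (P.trim hm)] {h N : Ω → ℝ}
    (hh : Integrable h P) (hh_nonneg : 0 ≤ᵐ[P] h) (hpos : ∀ᵐ ω ∂P, 0 < P[h|m] ω)
    (hN : StronglyMeasurable[m] N) (hN_int : Integrable N P) :
    P[fun ω => h ω * N ω / P[h|m] ω | m] =ᵐ[P] N := by
  have hZ := integrable_mul_div_condExp hm hh hh_nonneg hpos hN hN_int
  have hswap : (fun ω => h ω * N ω / P[h|m] ω) = N / P[h|m] * h := by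
    funext ω; simp only [Pi.mul_apply, Pi.div_apply]; ring
  rw [hswap] at hZ ⊢
  filter_upwards [condExp_mul_of_stronglyMeasurable_left (hN.div stronglyMeasurable_condExp) hZ hh,
    hpos] with ω hω hDω
  rw [hω, Pi.mul_apply, Pi.div_apply, div_mul_cancel₀ _ hDω.ne']

theorem MeasurableSpace.comap_val_sup_generateFrom_le {mF : MeasurableSpace Ω} {S : Set (Set Ω)}
    {A : Set Ω} (hS : ∀ D ∈ S, Disjoint A D) :
    (mF ⊔ generateFrom S).comap ((↑) : A → Ω) ≤ mF.comap (↑) := by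
  rw [comap_sup, comap_generateFrom]
  refine sup_le le_rfl (generateFrom_le ?_)
  rintro _ ⟨D, hD, rfl⟩
  rw [Subtype.preimage_coe_eq_empty.2 (Set.disjoint_iff_inter_eq_empty.1 (hS D hD))]
  exact MeasurableSet.empty

theorem setIntegral_eq_of_support_subset_of_inter_eq {E : Type*} [NormedAddCommGroup E]
    [NormedSpace ℝ E] {μ : Measure Ω} {A C F : Set Ω} {g : Ω → E}
    (hA : MeasurableSet A) (hg : Function.support g ⊆ A) (hCF : A ∩ C = A ∩ F) :
    ∫ ω in C, g ω ∂μ = ∫ ω in F, g ω ∂μ := by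
  rw [← Set.indicator_eq_self.2 hg, setIntegral_indicator hA, setIntegral_indicator hA,
    Set.inter_comm, hCF, Set.inter_comm]

theorem condExp_ae_eq_indicator_mul_condExp_div {mG : MeasurableSpace Ω} [IsFiniteMeasure P]
    (hmG : m ≤ mG) (hG : mG ≤ m0) {A : Set Ω} (hA : MeasurableSet[mG] A)
    (htrace : mG.comap ((↑) : A → Ω) ≤ m.comap (↑)) {f : Ω → ℝ} (hf : Integrable f P)
    (hfA : Function.support f ⊆ A)
    (hpos : ∀ᵐ ω ∂P, 0 < P[A.indicator (fun _ => (1 : ℝ)) | m] ω) :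
    P[f|mG] =ᵐ[P] fun ω =>
      A.indicator (fun _ => (1 : ℝ)) ω * P[f|m] ω / P[A.indicator (fun _ => (1 : ℝ)) | m] ω := by
  set ind := A.indicator (fun _ => (1 : ℝ))
  have hm : m ≤ m0 := hmG.trans hG
  have hA0 : MeasurableSet[m0] A := hG _ hA
  have hind : Integrable ind P := (integrable_const 1).indicator hA0
  have hind_nonneg : 0 ≤ᵐ[P] ind := ae_of_all _ (Set.indicator_nonneg fun _ _ => zero_le_one)
  have hN : StronglyMeasurable[m] P[f|m] := stronglyMeasurable_condExp
  have hZ := integrable_mul_div_condExp hm hind hind_nonneg hpos hN integrable_condExp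
  have hZm := condExp_mul_div_condExp hm hind hind_nonneg hpos hN integrable_condExp
  have hZA : Function.support (fun ω => ind ω * P[f|m] ω / P[ind|m] ω) ⊆ A := fun ω hω => by
    by_contra hωA
    exact hω (by simp [ind, hωA])
  refine (ae_eq_condExp_of_forall_setIntegral_eq hG hf (fun C _ _ => hZ.integrableOn)
    (fun C hC _ => ?_) ?_).symm
  · obtain ⟨F, hF, hFC⟩ := htrace _ ⟨C, hC, rfl⟩
    have hCF : A ∩ C = A ∩ F := ((Subtype.preimage_val_eq_preimage_val_iff _ _ _).1 hFC).symm
    calc ∫ ω in C, ind ω * P[f|m] ω / P[ind|m] ω ∂P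
        = ∫ ω in F, ind ω * P[f|m] ω / P[ind|m] ω ∂P :=
          setIntegral_eq_of_support_subset_of_inter_eq hA0 hZA hCF
      _ = ∫ ω in F, P[fun ω => ind ω * P[f|m] ω / P[ind|m] ω | m] ω ∂P :=
          (setIntegral_condExp hm hZ hF).symm
      _ = ∫ ω in F, P[f|m] ω ∂P := integral_congr_ae (ae_restrict_of_ae hZm)
      _ = ∫ ω in F, f ω ∂P := setIntegral_condExp hm hf hF
      _ = ∫ ω in C, f ω ∂P := (setIntegral_eq_of_support_subset_of_inter_eq hA0 hfA hCF).symm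
  · exact (((measurable_const.indicator hA).mul (hN.measurable.mono hmG le_rfl)).div
      (stronglyMeasurable_condExp.measurable.mono hmG le_rfl)).aestronglyMeasurable

/-- The information `𝒟_s` revealed by the default time `τ` up to time `s`. -/
abbrev defaultSigmaAlgebra (τ : Ω → ℝ≥0∞) (s : ℝ) : MeasurableSpace Ω :=
  MeasurableSpace.generateFrom {A | ∃ u : ℝ, 0 ≤ u ∧ u ≤ s ∧ A = {ω | τ ω ≤ ENNReal.ofReal u}}

theorem defaultSigmaAlgebra_le {τ : Ω → ℝ≥0∞} (hτ : Measurable τ) (s : ℝ) :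
    defaultSigmaAlgebra τ s ≤ m0 := by
  refine MeasurableSpace.generateFrom_le ?_
  rintro _ ⟨u, -, -, rfl⟩
  exact hτ measurableSet_Iic

theorem measurableSet_defaultSigmaAlgebra_ofReal_lt (τ : Ω → ℝ≥0∞) {s : ℝ} (hs : 0 ≤ s) :
    MeasurableSet[defaultSigmaAlgebra τ s] {ω | ENNReal.ofReal s < τ ω} := by
  have hτs : MeasurableSet[defaultSigmaAlgebra τ s] {ω | τ ω ≤ ENNReal.ofReal s} :=
    MeasurableSpace.measurableSet_generateFrom ⟨s, hs, le_rfl, rfl⟩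
  convert hτs.compl using 1
  ext ω
  simp

theorem comap_val_sup_defaultSigmaAlgebra_le (mF : MeasurableSpace Ω) (τ : Ω → ℝ≥0∞) (s : ℝ) :
    (mF ⊔ defaultSigmaAlgebra τ s).comap ((↑) : {ω | ENNReal.ofReal s < τ ω} → Ω) ≤
      mF.comap (↑) := by
  refine MeasurableSpace.comap_val_sup_generateFrom_le ?_
  rintro _ ⟨u, -, hus, rfl⟩
  exact Set.disjoint_left.2 fun ω hsω huω =>
    (hsω.trans_le (huω.trans (ENNReal.ofReal_le_ofReal hus))).false

end

theorem key_lemma_progressive_enlargement_general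
    {Ω : Type*} {m0 : MeasurableSpace Ω} (P : Measure Ω) [IsProbabilityMeasure P]
    (ℱ : Filtration ℝ m0)
    (τ : Ω → ℝ≥0∞) (hτ_meas : Measurable τ)
    (𝒟 : ℝ → MeasurableSpace Ω)
    (h𝒟 : ∀ s : ℝ, 𝒟 s = MeasurableSpace.generateFrom
      {A | ∃ u : ℝ, 0 ≤ u ∧ u ≤ s ∧ A = {ω | τ ω ≤ ENNReal.ofReal u}})
    (𝒢 : ℝ → MeasurableSpace Ω) (h𝒢 : ∀ s : ℝ, 𝒢 s = ℱ s ⊔ 𝒟 s)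
    (s t : ℝ) (hs : 0 ≤ s) (hst : s ≤ t)
    (Y : Ω → ℝ) (hY_int : Integrable Y P)
    (hpos : ∀ᵐ ω ∂P,
      0 < (P[Set.indicator {ω' | ENNReal.ofReal s < τ ω'} (fun _ => (1 : ℝ)) | ℱ s]) ω) :
    P[fun ω => Set.indicator {ω' | ENNReal.ofReal t < τ ω'} (fun _ => (1 : ℝ)) ω * Y ω | 𝒢 s]
      =ᵐ[P] fun ω =>
        Set.indicator {ω' | ENNReal.ofReal s < τ ω'} (fun _ => (1 : ℝ)) ω *
          (P[fun ω' => Set.indicator {ω'' | ENNReal.ofReal t < τ ω''} (fun _ => (1 : ℝ)) ω' * Y ω'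
              | ℱ s]) ω /
          (P[Set.indicator {ω' | ENNReal.ofReal s < τ ω'} (fun _ => (1 : ℝ)) | ℱ s]) ω := by
  have hB : MeasurableSet {ω | ENNReal.ofReal t < τ ω} := measurableSet_lt measurable_const hτ_meas
  have hf : Integrable
      (fun ω => Set.indicator {ω' | ENNReal.ofReal t < τ ω'} (fun _ => (1 : ℝ)) ω * Y ω) P := by
    simpa [← Set.indicator_mul_left] using hY_int.indicator hB
  have hf_support : Function.support
      (fun ω => Set.indicator {ω' | ENNReal.ofReal t < τ ω'} (fun _ => (1 : ℝ)) ω * Y ω) ⊆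
        {ω | ENNReal.ofReal s < τ ω} :=
    (Function.support_mul_subset_left _ _).trans <| Set.support_indicator_subset.trans
      fun ω htω => (ENNReal.ofReal_le_ofReal hst).trans_lt htω
  rw [h𝒢, h𝒟]
  exact condExp_ae_eq_indicator_mul_condExp_div le_sup_left
    (sup_le (ℱ.le s) (defaultSigmaAlgebra_le hτ_meas s))
    (le_sup_right (a := ℱ s) _ (measurableSet_defaultSigmaAlgebra_ofReal_lt τ hs))
    (comap_val_sup_defaultSigmaAlgebra_le (ℱ s) τ s) hf hf_support hpos

/-- Lemma 3.3 of the paper (the classical key lemma of reduced-form credit risk):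
for the progressively enlarged filtration `𝒢_s = ℱ_s ∨ σ({τ ≤ u} : u ≤ s)` and an
integrable random variable `Y`,
`E[1_{{τ>t}} Y | 𝒢_s] = 1_{{τ>s}} E[1_{{τ>t}} Y | ℱ_s] / E[1_{{τ>s}} | ℱ_s]` a.s. -/
theorem key_lemma_progressive_enlargement
    {Ω : Type*} {m0 : MeasurableSpace Ω} (P : Measure Ω) [IsProbabilityMeasure P]
    (ℱ : Filtration ℝ m0)
    (τ : Ω → ℝ≥0∞) (hτ_meas : Measurable τ)
    (𝒟 : ℝ → MeasurableSpace Ω)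
    (h𝒟 : ∀ s : ℝ, 𝒟 s = MeasurableSpace.generateFrom
      {A | ∃ u : ℝ, 0 ≤ u ∧ u ≤ s ∧ A = {ω | τ ω ≤ ENNReal.ofReal u}})
    (𝒢 : ℝ → MeasurableSpace Ω) (h𝒢 : ∀ s : ℝ, 𝒢 s = ℱ s ⊔ 𝒟 s)
    (s t : ℝ) (hs : 0 ≤ s) (hst : s ≤ t)
    (Y : Ω → ℝ) (hY_meas : Measurable Y) (hY_int : Integrable Y P)
    (hpos : ∀ᵐ ω ∂P,
      0 < (P[Set.indicator {ω' | ENNReal.ofReal s < τ ω'} (fun _ => (1 : ℝ)) | ℱ s]) ω) :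
    P[fun ω => Set.indicator {ω' | ENNReal.ofReal t < τ ω'} (fun _ => (1 : ℝ)) ω * Y ω | 𝒢 s]
      =ᵐ[P] fun ω =>
        Set.indicator {ω' | ENNReal.ofReal s < τ ω'} (fun _ => (1 : ℝ)) ω *
          (P[fun ω' => Set.indicator {ω'' | ENNReal.ofReal t < τ ω''} (fun _ => (1 : ℝ)) ω' * Y ω'
              | ℱ s]) ω /
          (P[Set.indicator {ω' | ENNReal.ofReal s < τ ω'} (fun _ => (1 : ℝ)) | ℱ s]) ω :=
  key_lemma_progressive_enlargement_general P ℱ τ hτ_meas 𝒟 h𝒟 𝒢 h𝒢 s t hs hst Y hY_int hpos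
end

section
/- Let (Ω, ℱ, (ℱ_t)_{t∈[0,T_N]}) be a filtered measurable space with tenor dates 0 = T_0 < T_1 < ⋯ < T_N and day-count fractions δ_i = T_{i+1} − T_i, and let P_1, …, P_N be probability measures on (Ω, ℱ). For each i let H(·, T_i) be a nonnegative (ℱ_t)-adapted process on [0,T_i], extended by H(t,T_i) := H(T_i,T_i) for t > T_i, and define ℍ(t, T_k) := ∏_{i=0}^{k} (1 + δ_i H(t, T_i))^{-1}. Assume that for every k ∈ {0,1,…,N−1} the process (ℍ(t,T_k))_{0 ≤ t ≤ T_k} is a martingale under P_{k+1}, and that ℍ(t,T_k) > 0. Then for every k ∈ {1,…,N−1} and t ≤ T_k: E_{P_k}[ ∏_{i=0}^{k-1} (1 + δ_i H(T_i,T_i))^{-1} | ℱ_t ] / E_{P_{k+1}}[ ∏_{i=0}^{k} (1 + δ_i H(T_i,T_i))^{-1} | ℱ_t ] = 1 + δ_k H(t, T_k). -/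
/-!
Because `H(·,T_i)` is frozen after `T_i`, the product `∏_{i≤n}(1+δ_iH(T_i,T_i))⁻¹` equals
`ℍ(s,T_n)` for every `s ≥ T_n`. So `ℍ(·,T_n)` is a `P_{n+1}`-martingale on `[0,T_n]` that stays
constant afterwards, and the conditional expectation of this product given `ℱ_t` is `ℍ(t,T_n)`
for every `t ≥ 0`. Numerator and denominator are thus `ℍ(t,T_{k-1})` (carried from `P_k` to
`P_{k+1}` by absolute continuity) and `ℍ(t,T_k)`, whose ratio is the last factor
`1 + δ_kH(t,T_k)` of `ℍ(t,T_k)`.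
-/

open MeasureTheory Finset

section FrozenMartingale

variable {Ω : Type*} {m0 : MeasurableSpace Ω} {μ : Measure Ω} [IsFiniteMeasure μ]
  {ℱ : Filtration ℝ m0} {X : ℝ → Ω → ℝ} {T t : ℝ}

theorem condExp_terminal_ae_eq_of_frozen (hX : StronglyAdapted ℱ X) (hint : Integrable (X T) μ)
    (hmart : ∀ s, 0 ≤ s → s ≤ T → μ[X T | ℱ s] =ᵐ[μ] X s)
    (hfrozen : ∀ s, T < s → X s = X T) (ht : 0 ≤ t) :
    μ[X T | ℱ t] =ᵐ[μ] X t := by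
  rcases le_or_gt t T with htT | hTt
  · exact hmart t ht htT
  · rw [hfrozen t hTt, condExp_of_stronglyMeasurable (ℱ.le t) (hfrozen t hTt ▸ hX t) hint]

end FrozenMartingale

section SurvivalDiscount

variable {Ω : Type*} (δ : ℕ → ℝ) (H : ℕ → ℝ → Ω → ℝ)

noncomputable def survivalDiscount (n : ℕ) (t : ℝ) (ω : Ω) : ℝ :=
  ∏ i ∈ range (n + 1), (1 + δ i * H i t ω)⁻¹

variable {δ H}

theorem survivalDiscount_succ (n : ℕ) (t : ℝ) (ω : Ω) :
    survivalDiscount δ H (n + 1) t ω =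
      survivalDiscount δ H n t ω * (1 + δ (n + 1) * H (n + 1) t ω)⁻¹ :=
  prod_range_succ _ _

theorem survivalDiscount_div_succ {n : ℕ} {t : ℝ} {ω : Ω}
    (h : survivalDiscount δ H n t ω ≠ 0) :
    survivalDiscount δ H n t ω / survivalDiscount δ H (n + 1) t ω =
      1 + δ (n + 1) * H (n + 1) t ω := by
  rw [survivalDiscount_succ, div_mul_cancel_left₀ h, inv_inv]

theorem stronglyMeasurable_survivalDiscount {m : MeasurableSpace Ω} {n : ℕ} {t : ℝ}
    (hH : ∀ i, StronglyMeasurable[m] (H i t)) : StronglyMeasurable[m] (survivalDiscount δ H n t) :=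
  Finset.stronglyMeasurable_fun_prod _ fun i _ =>
    (measurable_const.add ((hH i).measurable.const_mul (δ i))).inv.stronglyMeasurable

theorem survivalDiscount_eq_frozen {T : ℕ → ℝ} {n : ℕ} {s : ℝ} (hT : MonotoneOn T (Set.Iic n))
    (hfreeze : ∀ i t, T i < t → H i t = H i (T i)) (hs : T n ≤ s) (ω : Ω) :
    survivalDiscount δ H n s ω = ∏ i ∈ range (n + 1), (1 + δ i * H i (T i) ω)⁻¹ := by
  refine prod_congr rfl fun i hi => ?_
  have hin : i ≤ n := Nat.lt_succ_iff.mp (mem_range.mp hi)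
  rcases (hT hin (le_refl n) hin |>.trans hs).lt_or_eq with hlt | heq
  · rw [hfreeze i s hlt]
  · rw [heq]

end SurvivalDiscount

theorem defaultable_ratio_identity_general
    {Ω : Type*} {m0 : MeasurableSpace Ω}
    (N : ℕ)
    (T : ℕ → ℝ) (hT0 : T 0 = 0) (hT_mono : ∀ i < N, T i < T (i + 1))
    (δ : ℕ → ℝ)
    (ℱ : Filtration ℝ m0)
    (P : ℕ → Measure Ω)
    (hP_prob : ∀ k, 1 ≤ k → k ≤ N → IsProbabilityMeasure (P k))
    (hP_ac : ∀ j l, 1 ≤ j → j ≤ N → 1 ≤ l → l ≤ N → P j ≪ P l)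
    (H : ℕ → ℝ → Ω → ℝ)
    (hH_adapted : ∀ i t, StronglyMeasurable[ℱ t] (H i t))
    (hH_freeze : ∀ i t, T i < t → H i t = H i (T i))
    (ℍ : ℕ → ℝ → Ω → ℝ)
    (hℍ : ∀ k t ω, ℍ k t ω = ∏ i ∈ Finset.range (k + 1), (1 + δ i * H i t ω)⁻¹)
    (hℍ_pos : ∀ k t ω, 0 < ℍ k t ω)
    (hℍ_int : ∀ k, k < N → ∀ t, 0 ≤ t → t ≤ T k → Integrable (ℍ k t) (P (k + 1)))
    (hℍ_mart : ∀ k, k < N → ∀ s t : ℝ, 0 ≤ s → s ≤ t → t ≤ T k →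
      (P (k + 1))[ℍ k t | ℱ s] =ᵐ[P (k + 1)] ℍ k s) :
    ∀ k, 1 ≤ k → k ≤ N - 1 → ∀ t : ℝ, 0 ≤ t → t ≤ T k →
      (fun ω =>
          ((P k)[fun ω' => ∏ i ∈ Finset.range k, (1 + δ i * H i (T i) ω')⁻¹ | ℱ t]) ω /
          ((P (k + 1))[fun ω' => ∏ i ∈ Finset.range (k + 1), (1 + δ i * H i (T i) ω')⁻¹ | ℱ t]) ω)
        =ᵐ[P (k + 1)] fun ω => 1 + δ k * H k t ω := by
  intro k hk1 hkN t ht _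
  obtain rfl : ℍ = survivalDiscount δ H := funext₃ hℍ
  have hT : MonotoneOn T (Set.Iic N) := (strictMonoOn_Iic_of_lt_succ hT_mono).monotoneOn
  have hcond : ∀ n < N, (P (n + 1))[fun ω => ∏ i ∈ range (n + 1), (1 + δ i * H i (T i) ω)⁻¹ | ℱ t]
      =ᵐ[P (n + 1)] survivalDiscount δ H n t := by
    intro n hn
    have := hP_prob (n + 1) n.succ_pos hn
    have hfrozen (s : ℝ) (hs : T n ≤ s) : survivalDiscount δ H n s =
        fun ω => ∏ i ∈ range (n + 1), (1 + δ i * H i (T i) ω)⁻¹ := funext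
      (survivalDiscount_eq_frozen (hT.mono (Set.Iic_subset_Iic.mpr hn.le)) hH_freeze hs)
    have hTn : 0 ≤ T n := hT0 ▸ hT (Nat.zero_le N) hn.le (Nat.zero_le n)
    rw [← hfrozen (T n) le_rfl]
    exact condExp_terminal_ae_eq_of_frozen
      (fun s => stronglyMeasurable_survivalDiscount (hH_adapted · s))
      (hℍ_int n hn _ hTn le_rfl) (fun s hs hsT => hℍ_mart n hn s _ hs hsT le_rfl)
      (fun s hs => (hfrozen s hs.le).trans (hfrozen _ le_rfl).symm) ht
  obtain ⟨j, rfl⟩ : ∃ j, k = j + 1 := ⟨k - 1, by omega⟩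
  have hnum := (hcond j (by omega)).filter_mono <| Measure.ae_le_iff_absolutelyContinuous.mpr <|
    hP_ac (j + 2) (j + 1) (by omega) (by omega) (by omega) (by omega)
  filter_upwards [hnum, hcond (j + 1) (by omega)] with ω hnum_ω hden_ω
  rw [hnum_ω, hden_ω, survivalDiscount_div_succ (hℍ_pos j t ω).ne']

/-- Equation (3.13) / Proposition 3.6 of the paper: if each survival-discount
product `ℍ(·,T_k)` is a `P_{k+1}`-martingale on `[0,T_k]`, then for `1 ≤ k ≤ N−1`
and `t ≤ T_k`,
`E_{P_k}[∏_{i<k}(1+δ_iH(T_i,T_i))⁻¹ | ℱ_t] / E_{P_{k+1}}[∏_{i<k+1}(1+δ_iH(T_i,T_i))⁻¹ | ℱ_t]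
  = 1 + δ_k H(t,T_k)`. -/
theorem defaultable_ratio_identity
    {Ω : Type*} {m0 : MeasurableSpace Ω}
    (N : ℕ) (hN : 2 ≤ N)
    (T : ℕ → ℝ) (hT0 : T 0 = 0) (hT_mono : ∀ i < N, T i < T (i + 1))
    (δ : ℕ → ℝ) (hδ : ∀ i, δ i = T (i + 1) - T i)
    (ℱ : Filtration ℝ m0)
    (P : ℕ → Measure Ω)
    (hP_prob : ∀ k, 1 ≤ k → k ≤ N → IsProbabilityMeasure (P k))
    (hP_ac : ∀ j l, 1 ≤ j → j ≤ N → 1 ≤ l → l ≤ N → P j ≪ P l)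
    (H : ℕ → ℝ → Ω → ℝ)
    (hH_nonneg : ∀ i t ω, 0 ≤ H i t ω)
    (hH_adapted : ∀ i t, StronglyMeasurable[ℱ t] (H i t))
    (hH_freeze : ∀ i t, T i < t → H i t = H i (T i))
    (ℍ : ℕ → ℝ → Ω → ℝ)
    (hℍ : ∀ k t ω, ℍ k t ω = ∏ i ∈ Finset.range (k + 1), (1 + δ i * H i t ω)⁻¹)
    (hℍ_pos : ∀ k t ω, 0 < ℍ k t ω)
    (hℍ_int : ∀ k, k < N → ∀ t, 0 ≤ t → t ≤ T k → Integrable (ℍ k t) (P (k + 1)))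
    (hℍ_mart : ∀ k, k < N → ∀ s t : ℝ, 0 ≤ s → s ≤ t → t ≤ T k →
      (P (k + 1))[ℍ k t | ℱ s] =ᵐ[P (k + 1)] ℍ k s) :
    ∀ k, 1 ≤ k → k ≤ N - 1 → ∀ t : ℝ, 0 ≤ t → t ≤ T k →
      (fun ω =>
          ((P k)[fun ω' => ∏ i ∈ Finset.range k, (1 + δ i * H i (T i) ω')⁻¹ | ℱ t]) ω /
          ((P (k + 1))[fun ω' => ∏ i ∈ Finset.range (k + 1), (1 + δ i * H i (T i) ω')⁻¹ | ℱ t]) ω)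
        =ᵐ[P (k + 1)] fun ω => 1 + δ k * H k t ω :=
  defaultable_ratio_identity_general N T hT0 hT_mono δ ℱ P hP_prob hP_ac H hH_adapted hH_freeze ℍ hℍ
    hℍ_pos hℍ_int hℍ_mart
end

section
/- Let d ≥ 1, I ⊆ ℝ^d, T_1 < ⋯ < T_N ≤ T, and for each t ∈ [0,T] let φ_t : I → ℝ and ψ_t : I → ℝ^d be order-preserving maps (u ≤ v componentwise implies φ_t(u) ≤ φ_t(v) and ψ_t(u) ≤ ψ_t(v)), with ψ_0(u) = u and φ_0(u) = 0 for all u ∈ I. Let u_1, …, u_N and v_1, …, v_N be points of I with v_1 ≤ u_1 such that for all t ∈ [0,T] and all k: φ_t(v_k) − φ_t(u_k) ≥ φ_t(v_{k+1}) − φ_t(u_{k+1}) and ψ_t(v_k) − ψ_t(u_k) ≥ ψ_t(v_{k+1}) − ψ_t(u_{k+1}) (componentwise). For k ∈ {0,…,N−1}, t ∈ [0, T_N] and x ∈ [0,∞)^d define ℍ_k(t, x) := exp( φ_{T_N−t}(v_{k+1}) − φ_{T_N−t}(u_{k+1}) + ⟨ψ_{T_N−t}(v_{k+1}) − ψ_{T_N−t}(u_{k+1}),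 x⟩ ). Then: (a) v_k ≤ u_k for every k; (b) 0 ≤ ℍ_k(t,x) ≤ 1 for all k, t, x; and (c) ℍ_k(t,x) ≥ ℍ_{k+1}(t,x) for all k, t, x. -/
open MeasureTheory

/-- Deterministic core of Proposition 3.9 of the paper: with order-preserving
cumulant functions `φ_t, ψ_t` (with `φ_0 = 0`, `ψ_0 = id`) and parameter
sequences `u_k, v_k` satisfying `v_1 ≤ u_1` and the monotonicity conditions
(C4.a), (C4.b), the processes
`ℍ_k(t,x) = exp(φ_{T_N−t}(v_{k+1}) − φ_{T_N−t}(u_{k+1}) + ⟨ψ_{T_N−t}(v_{k+1}) − ψ_{T_N−t}(u_{k+1}), x⟩)`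
satisfy `v_k ≤ u_k`, `0 ≤ ℍ_k ≤ 1` and `ℍ_k ≥ ℍ_{k+1}` on the nonnegative
orthant. -/
theorem defaultable_H_processes_ordered
    (d : ℕ) (hd : 1 ≤ d)
    (I : Set (Fin d → ℝ))
    (N : ℕ) (hN : 1 ≤ N)
    (T : ℝ) (hT_nonneg : 0 ≤ T)
    (Ti : ℕ → ℝ) (hTi_mono : ∀ k, 1 ≤ k → k < N → Ti k < Ti (k + 1))
    (hTiN : Ti N ≤ T)
    (φ : ℝ → (Fin d → ℝ) → ℝ) (ψ : ℝ → (Fin d → ℝ) → (Fin d → ℝ))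
    (h_order : ∀ t ∈ Set.Icc (0 : ℝ) T, ∀ w ∈ I, ∀ w' ∈ I,
      w ≤ w' → φ t w ≤ φ t w' ∧ ψ t w ≤ ψ t w')
    (hψ0 : ∀ w ∈ I, ψ 0 w = w) (hφ0 : ∀ w ∈ I, φ 0 w = 0)
    (u v : ℕ → (Fin d → ℝ))
    (hu_mem : ∀ k, 1 ≤ k → k ≤ N → u k ∈ I)
    (hv_mem : ∀ k, 1 ≤ k → k ≤ N → v k ∈ I)
    (hv1u1 : v 1 ≤ u 1)
    (hC4a : ∀ t ∈ Set.Icc (0 : ℝ) T, ∀ k, 1 ≤ k → k < N →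
      φ t (v (k + 1)) - φ t (u (k + 1)) ≤ φ t (v k) - φ t (u k))
    (hC4b : ∀ t ∈ Set.Icc (0 : ℝ) T, ∀ k, 1 ≤ k → k < N →
      ψ t (v (k + 1)) - ψ t (u (k + 1)) ≤ ψ t (v k) - ψ t (u k))
    (ℍ : ℕ → ℝ → (Fin d → ℝ) → ℝ)
    (hℍ : ∀ k t x, ℍ k t x =
      Real.exp (φ (Ti N - t) (v (k + 1)) - φ (Ti N - t) (u (k + 1))
        + ∑ i, (ψ (Ti N - t) (v (k + 1)) i - ψ (Ti N - t) (u (k + 1)) i) * x i)) :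
    (∀ k, 1 ≤ k → k ≤ N → v k ≤ u k) ∧
    (∀ k, k < N → ∀ t ∈ Set.Icc (0 : ℝ) (Ti N), ∀ x : Fin d → ℝ, (∀ i, 0 ≤ x i) →
      0 ≤ ℍ k t x ∧ ℍ k t x ≤ 1) ∧
    (∀ k, k + 1 < N → ∀ t ∈ Set.Icc (0 : ℝ) (Ti N), ∀ x : Fin d → ℝ, (∀ i, 0 ≤ x i) →
      ℍ (k + 1) t x ≤ ℍ k t x) := by
  have h0T : (0 : ℝ) ∈ Set.Icc (0 : ℝ) T := ⟨le_refl 0, hT_nonneg⟩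
  -- (a)
  have hvu : ∀ k, 1 ≤ k → k ≤ N → v k ≤ u k := by
    intro k
    induction k with
    | zero => intro h; omega
    | succ n ih =>
      intro h1 hN'
      rcases Nat.eq_zero_or_pos n with hn0 | hn1
      · subst hn0; exact hv1u1
      · have hnN : n < N := by omega
        have hb := hC4b 0 h0T n hn1 hnN
        rw [hψ0 _ (hv_mem n hn1 (le_of_lt hnN)), hψ0 _ (hu_mem n hn1 (le_of_lt hnN)),
          hψ0 _ (hv_mem (n + 1) (by omega) hN'), hψ0 _ (hu_mem (n + 1) (by omega) hN')] at hb
        have hprev : v n ≤ u n := ih hn1 (le_of_lt hnN)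
        have : v (n + 1) - u (n + 1) ≤ 0 :=
          le_trans hb (sub_nonpos.mpr hprev)
        exact sub_nonpos.mp this
  refine ⟨hvu, ?_, ?_⟩
  · -- (b)
    intro k hk t ht x hx
    set s := Ti N - t with hs
    have hTiN0 : (0 : ℝ) ≤ Ti N := le_trans ht.1 ht.2
    have hsT : s ∈ Set.Icc (0 : ℝ) T :=
      ⟨by simp [hs]; linarith [ht.2], by simp [hs]; linarith [ht.1, hTiN]⟩
    have hk1 : 1 ≤ k + 1 := by omega
    have hkN : k + 1 ≤ N := by omega
    have hvm := hv_mem (k + 1) hk1 hkN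
    have hum := hu_mem (k + 1) hk1 hkN
    have hord := h_order s hsT (v (k + 1)) hvm (u (k + 1)) hum (hvu (k + 1) hk1 hkN)
    have hφ : φ s (v (k + 1)) - φ s (u (k + 1)) ≤ 0 := sub_nonpos.mpr hord.1
    have hsum : (∑ i, (ψ s (v (k + 1)) i - ψ s (u (k + 1)) i) * x i) ≤ 0 := by
      apply Finset.sum_nonpos
      intro i _
      exact mul_nonpos_of_nonpos_of_nonneg (sub_nonpos.mpr (hord.2 i)) (hx i)
    rw [hℍ]
    exact ⟨le_of_lt (Real.exp_pos _), Real.exp_le_one_iff.mpr (by linarith)⟩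
  · -- (c)
    intro k hk t ht x hx
    set s := Ti N - t with hs
    have hsT : s ∈ Set.Icc (0 : ℝ) T :=
      ⟨by simp [hs]; linarith [ht.2], by simp [hs]; linarith [ht.1, hTiN]⟩
    have ha := hC4a s hsT (k + 1) (by omega) hk
    have hb := hC4b s hsT (k + 1) (by omega) hk
    have hsum : (∑ i, (ψ s (v (k + 2)) i - ψ s (u (k + 2)) i) * x i)
        ≤ ∑ i, (ψ s (v (k + 1)) i - ψ s (u (k + 1)) i) * x i := by
      apply Finset.sum_le_sum
      intro i _
      apply mul_le_mul_of_nonneg_right _ (hx i)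
      have := hb i
      simp only [Pi.sub_apply] at this
      linarith
    rw [hℍ, hℍ]
    exact Real.exp_le_exp.mpr (by linarith)
end

section
/- Let μ be a probability measure on [0,∞)^d, u₊ ∈ [0,∞)^d, and define f(ξ) := ∫ exp(ξ ⟨u₊, y⟩) dμ(y) for ξ ∈ ℝ. Let c_1 ≥ c_2 ≥ ⋯ ≥ c_N = 1 and c̄_1 ≥ c̄_2 ≥ ⋯ ≥ c̄_N > 0 be real numbers with c̄_k ≤ c_k for every k. Assume f(1) < ∞ with f(1) > c_1, and that there exists λ < 0 with f(λ) < c̄_N. Then the function f is continuous and nondecreasing on [λ, 1], and there exist real numbers λ < η_N ≤ η_{N-1} ≤ ⋯ ≤ η_1 < 1 and 0 = ξ_N ≤ ξ_{N-1} ≤ ⋯ ≤ ξ_1 ≤ 1 such that f(ξ_k) = c_k, f(η_k) = c̄_k and η_k ≤ ξ_k for every k = 1,…,N. In particular, v_k := η_k u₊ and u_k := ξ_k u₊ are decreasing sequences in ℝ^d with v_k ≤ u_k componentwise. -/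
/-! On `μ`-almost every `y` the exponent `⟨u₊, y⟩` is nonnegative, so `f` is the moment generating
function of a nonnegative random variable: on `(-∞, 1]` its integrand is dominated by the
integrable one at `1`, whence `f` is continuous there (dominated convergence) and nondecreasing.
Each level `c_k` lies in `[f(0), f(1)]` and each `c̄_k` in `(f(λ), f(1))`; the first point of
`[0, 1]` resp. `[λ, 1]` where `f` reaches the level solves `f(ξ_k) = c_k` resp. `f(η_k) = c̄_k` by
the intermediate value theorem. Raising the level or starting later can only delay this first
passage, which gives both monotonicities and `η_k ≤ ξ_k`. -/

open MeasureTheory Set Real ProbabilityTheory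

section MgfOfNonneg

variable {Ω : Type*} [MeasurableSpace Ω] {μ : Measure Ω} {X : Ω → ℝ} {t u : ℝ}

lemma norm_exp_mul_le_exp_mul_of_nonneg {x : ℝ} (hx : 0 ≤ x) (htu : t ≤ u) :
    ‖exp (t * x)‖ ≤ exp (u * x) := by
  rw [norm_of_nonneg (exp_nonneg _)]
  exact exp_le_exp.mpr (mul_le_mul_of_nonneg_right htu hx)

lemma integrable_exp_mul_of_nonneg_of_le (hXm : AEMeasurable X μ) (hX : 0 ≤ᵐ[μ] X)
    (hu : Integrable (fun ω ↦ exp (u * X ω)) μ) (htu : t ≤ u) :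
    Integrable (fun ω ↦ exp (t * X ω)) μ :=
  hu.mono' (by fun_prop) <| by
    filter_upwards [hX] with ω hω using norm_exp_mul_le_exp_mul_of_nonneg hω htu

lemma monotoneOn_mgf_of_nonneg (hXm : AEMeasurable X μ) (hX : 0 ≤ᵐ[μ] X)
    (hu : Integrable (fun ω ↦ exp (u * X ω)) μ) : MonotoneOn (mgf X μ) (Iic u) := by
  intro s hs s' hs' hss'
  refine integral_mono_ae (integrable_exp_mul_of_nonneg_of_le hXm hX hu hs)
    (integrable_exp_mul_of_nonneg_of_le hXm hX hu hs') ?_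
  filter_upwards [hX] with ω hω
  exact exp_le_exp.mpr (mul_le_mul_of_nonneg_right hss' hω)

lemma continuousOn_mgf_of_nonneg (hXm : AEMeasurable X μ) (hX : 0 ≤ᵐ[μ] X)
    (hu : Integrable (fun ω ↦ exp (u * X ω)) μ) : ContinuousOn (mgf X μ) (Iic u) :=
  continuousOn_of_dominated (fun _ _ ↦ by fun_prop)
    (fun _ ht ↦ by
      filter_upwards [hX] with ω hω using norm_exp_mul_le_exp_mul_of_nonneg hω ht) hu
    (ae_of_all _ fun _ ↦ by fun_prop)

end MgfOfNonneg

section FirstHit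

variable {α δ : Type*} [ConditionallyCompleteLinearOrder α] [LinearOrder δ]
  {f : α → δ} {a a' b : α} {y y' : δ}

def firstHit (f : α → δ) (a b : α) (y : δ) : α :=
  sInf (Icc a b ∩ f ⁻¹' Ici y)

lemma firstHit_eq_left (hab : a ≤ b) (ha : y ≤ f a) : firstHit f a b y = a :=
  IsLeast.csInf_eq ⟨⟨left_mem_Icc.mpr hab, ha⟩, fun _ hx ↦ hx.1.1⟩

lemma firstHit_mono (haa' : a ≤ a') (hyy' : y ≤ y') (ha'b : a' ≤ b) (hb : y' ≤ f b) :
    firstHit f a b y ≤ firstHit f a' b y' :=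
  csInf_le_csInf ⟨a, fun _ hx ↦ hx.1.1⟩ ⟨b, right_mem_Icc.mpr ha'b, hb⟩
    (inter_subset_inter (Icc_subset_Icc_left haa') (preimage_mono (Ici_subset_Ici.mpr hyy')))

variable [TopologicalSpace α] [OrderTopology α] [TopologicalSpace δ] [OrderClosedTopology δ]

lemma firstHit_mem (hf : ContinuousOn f (Icc a b)) (hab : a ≤ b) (hb : y ≤ f b) :
    firstHit f a b y ∈ Icc a b ∩ f ⁻¹' Ici y :=
  (hf.preimage_isClosed_of_isClosed isClosed_Icc isClosed_Ici).csInf_mem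
    ⟨b, right_mem_Icc.mpr hab, hb⟩ ⟨a, fun _ hx ↦ hx.1.1⟩

lemma apply_firstHit [DenselyOrdered α] (hf : ContinuousOn f (Icc a b)) (hab : a ≤ b)
    (ha : f a ≤ y) (hb : y ≤ f b) : f (firstHit f a b y) = y := by
  obtain ⟨⟨hax, hxb⟩, hyx⟩ := firstHit_mem hf hab hb
  refine le_antisymm ?_ hyx
  by_contra! hlt
  -- the IVT on `[a, firstHit f a b y]` gives a point at level `y` that cannot precede the infimum
  obtain ⟨z, ⟨haz, hzx⟩, hfz⟩ :=
    intermediate_value_Icc hax (hf.mono (Icc_subset_Icc_right hxb)) ⟨ha, hlt.le⟩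
  have hxz : firstHit f a b y ≤ z :=
    csInf_le ⟨a, fun _ hx ↦ hx.1.1⟩ ⟨⟨haz, hzx.trans hxb⟩, hfz.ge⟩
  rw [le_antisymm hzx hxz] at hfz
  exact hlt.ne hfz.symm

lemma firstHit_mem_Ioo [DenselyOrdered α] (hf : ContinuousOn f (Icc a b)) (hab : a ≤ b)
    (ha : f a < y) (hb : y < f b) : firstHit f a b y ∈ Ioo a b := by
  obtain ⟨⟨hax, hxb⟩, -⟩ := firstHit_mem hf hab hb.le
  have hfx := apply_firstHit hf hab ha.le hb.le
  exact ⟨hax.lt_of_ne fun h ↦ ha.ne (h ▸ hfx), hxb.lt_of_ne fun h ↦ hb.ne (h ▸ hfx).symm⟩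

end FirstHit

theorem fit_defaultable_term_structure_general
    (d N : ℕ) (hN : 0 < N)
    (μ : Measure (Fin d → ℝ)) [IsProbabilityMeasure μ]
    (hsupp : μ {y | ¬ ∀ i, 0 ≤ y i} = 0)
    (uplus : Fin d → ℝ) (huplus : ∀ i, 0 ≤ uplus i)
    (f : ℝ → ℝ)
    (hf : ∀ ξ : ℝ, f ξ = ∫ y, Real.exp (ξ * ∑ i, uplus i * y i) ∂μ)
    (c cbar : Fin N → ℝ)
    (hc_anti : Antitone c) (hcbar_anti : Antitone cbar)
    (hcN : c ⟨N - 1, Nat.sub_lt hN one_pos⟩ = 1)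
    (hcbar_le : ∀ k, cbar k ≤ c k)
    (hf1_int : Integrable (fun y => Real.exp (∑ i, uplus i * y i)) μ)
    (hf1_gt : c ⟨0, hN⟩ < f 1)
    (lam : ℝ) (hlam : lam < 0)
    (hflam : f lam < cbar ⟨N - 1, Nat.sub_lt hN one_pos⟩) :
    ContinuousOn f (Set.Icc lam 1) ∧
    MonotoneOn f (Set.Icc lam 1) ∧
    ∃ η ξ : Fin N → ℝ,
      Antitone η ∧ Antitone ξ ∧
      (∀ k, lam < η k ∧ η k < 1) ∧
      ξ ⟨N - 1, Nat.sub_lt hN one_pos⟩ = 0 ∧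
      (∀ k, 0 ≤ ξ k ∧ ξ k ≤ 1) ∧
      (∀ k, f (ξ k) = c k) ∧
      (∀ k, f (η k) = cbar k) ∧
      (∀ k, η k ≤ ξ k) ∧
      Antitone (fun k => η k • uplus) ∧
      Antitone (fun k => ξ k • uplus) ∧
      (∀ k, η k • uplus ≤ ξ k • uplus) := by
  set X : (Fin d → ℝ) → ℝ := fun y ↦ ∑ i, uplus i * y i
  have hXm : AEMeasurable X μ := by fun_prop
  have hX : 0 ≤ᵐ[μ] X := by
    filter_upwards [ae_iff.mpr hsupp] with y hy
    exact Finset.sum_nonneg fun i _ ↦ mul_nonneg (huplus i) (hy i)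
  have hint : Integrable (fun y ↦ exp (1 * X y)) μ := by simpa using hf1_int
  obtain rfl : f = mgf X μ := funext hf
  have hcont : ContinuousOn (mgf X μ) (Icc lam 1) :=
    (continuousOn_mgf_of_nonneg hXm hX hint).mono Icc_subset_Iic_self
  have hcont₀ : ContinuousOn (mgf X μ) (Icc 0 1) := hcont.mono (Icc_subset_Icc_left hlam.le)
  have hlast (k : Fin N) : k ≤ ⟨N - 1, Nat.sub_lt hN one_pos⟩ := Nat.le_sub_one_of_lt k.2
  have hc_lt (k) : c k < mgf X μ 1 := (hc_anti (Nat.zero_le k.1)).trans_lt hf1_gt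
  have hcbar_lt (k) : cbar k < mgf X μ 1 := (hcbar_le k).trans_lt (hc_lt k)
  have hlam_lt (k) : mgf X μ lam < cbar k := hflam.trans_le (hcbar_anti (hlast k))
  have h0_le (k) : mgf X μ 0 ≤ c k := mgf_zero.trans_le (hcN ▸ hc_anti (hlast k))
  have hlam1 : lam ≤ 1 := hlam.le.trans zero_le_one
  have hu : 0 ≤ uplus := huplus
  set η := fun k ↦ firstHit (mgf X μ) lam 1 (cbar k)
  set ξ := fun k ↦ firstHit (mgf X μ) 0 1 (c k)
  have hη_anti : Antitone η := fun k _ hkk' ↦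
    firstHit_mono le_rfl (hcbar_anti hkk') hlam1 (hcbar_lt k).le
  have hξ_anti : Antitone ξ := fun k _ hkk' ↦
    firstHit_mono le_rfl (hc_anti hkk') zero_le_one (hc_lt k).le
  have hηξ (k) : η k ≤ ξ k := firstHit_mono hlam.le (hcbar_le k) zero_le_one (hc_lt k).le
  exact ⟨hcont, (monotoneOn_mgf_of_nonneg hXm hX hint).mono Icc_subset_Iic_self, η, ξ,
    hη_anti, hξ_anti, fun k ↦ firstHit_mem_Ioo hcont hlam1 (hlam_lt k) (hcbar_lt k),
    firstHit_eq_left zero_le_one (mgf_zero.trans hcN.symm).ge,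
    fun k ↦ (firstHit_mem hcont₀ zero_le_one (hc_lt k).le).1,
    fun k ↦ apply_firstHit hcont₀ zero_le_one (h0_le k) (hc_lt k).le,
    fun k ↦ apply_firstHit hcont hlam1 (hlam_lt k).le (hcbar_lt k).le, hηξ,
    hη_anti.smul_const hu, hξ_anti.smul_const hu,
    fun k ↦ smul_le_smul_of_nonneg_right (hηξ k) hu⟩

/-- Proposition 3.11 of the paper: fitting the initial default-free and
defaultable term structures simultaneously.  The function
`f(ξ) = ∫ exp(ξ⟨u₊,y⟩) dμ` is continuous and nondecreasing on `[λ,1]`, and there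
exist `λ < η_N ≤ ⋯ ≤ η_1 < 1` and `0 = ξ_N ≤ ⋯ ≤ ξ_1 ≤ 1` with `f(ξ_k) = c_k`,
`f(η_k) = c̄_k` and `η_k ≤ ξ_k`; in particular `v_k := η_k u₊` and
`u_k := ξ_k u₊` are decreasing with `v_k ≤ u_k` componentwise. -/
theorem fit_defaultable_term_structure
    (d N : ℕ) (hN : 0 < N)
    (μ : Measure (Fin d → ℝ)) [IsProbabilityMeasure μ]
    (hsupp : μ {y | ¬ ∀ i, 0 ≤ y i} = 0)
    (uplus : Fin d → ℝ) (huplus : ∀ i, 0 ≤ uplus i)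
    (f : ℝ → ℝ)
    (hf : ∀ ξ : ℝ, f ξ = ∫ y, Real.exp (ξ * ∑ i, uplus i * y i) ∂μ)
    (c cbar : Fin N → ℝ)
    (hc_anti : Antitone c) (hcbar_anti : Antitone cbar)
    (hcN : c ⟨N - 1, Nat.sub_lt hN one_pos⟩ = 1)
    (hcbarN : 0 < cbar ⟨N - 1, Nat.sub_lt hN one_pos⟩)
    (hcbar_le : ∀ k, cbar k ≤ c k)
    (hf1_int : Integrable (fun y => Real.exp (∑ i, uplus i * y i)) μ)
    (hf1_gt : c ⟨0, hN⟩ < f 1)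
    (lam : ℝ) (hlam : lam < 0)
    (hflam : f lam < cbar ⟨N - 1, Nat.sub_lt hN one_pos⟩) :
    ContinuousOn f (Set.Icc lam 1) ∧
    MonotoneOn f (Set.Icc lam 1) ∧
    ∃ η ξ : Fin N → ℝ,
      Antitone η ∧ Antitone ξ ∧
      (∀ k, lam < η k ∧ η k < 1) ∧
      ξ ⟨N - 1, Nat.sub_lt hN one_pos⟩ = 0 ∧
      (∀ k, 0 ≤ ξ k ∧ ξ k ≤ 1) ∧
      (∀ k, f (ξ k) = c k) ∧
      (∀ k, f (η k) = cbar k) ∧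
      (∀ k, η k ≤ ξ k) ∧
      Antitone (fun k => η k • uplus) ∧
      Antitone (fun k => ξ k • uplus) ∧
      (∀ k, η k • uplus ≤ ξ k • uplus) :=
  fit_defaultable_term_structure_general d N hN μ hsupp uplus huplus f hf c cbar hc_anti hcbar_anti
    hcN hcbar_le hf1_int hf1_gt lam hlam hflam
end

section
/- Let λ, θ, η, ℓ ≥ 0 with λ > 0, let μ > 0 with λμ ≠ 2η², let T > 0, and let u ∈ ℝ, and assume η > 0 or θ = 0 (in the latter case the first term of φ_t(u) below is taken to be 0). Set a(t) := exp(−λt), b(t) := (1 − exp(−λt))/λ and ψ_t(u) := a(t)u/(1 − 2η² b(t) u). Assume for every t ∈ [0,T]: 1 − 2η² b(t) u > 0, the quantity λ(μu − 1)/( a(t)(λμ − 2η²)u − λ + 2η² u ) is strictly positive, and μ ψ_t(u) ≠ 1. Define φ_t(u) := −(λθ/(2η²)) log(1 − 2η² b(t) u) − (ℓμ/(λμ − 2η²)) log( λ(μu − 1)/( a(t)(λμ − 2η²)u − λ + 2η² u ) ). Then φ_0(u) = 0 and for every t ∈ [0,T] the function t ↦ φ_t(u) is differentiable with derivative d/dt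 φ_t(u) = λθ ψ_t(u) + ℓ ψ_t(u)/(1/μ − ψ_t(u)). -/
/-- Example 2.3 of the paper: the explicit function `φ_t(u)` solves the
generalized Riccati equation `∂_t φ_t(u) = λθψ_t(u) + ℓψ_t(u)/(1/μ − ψ_t(u))`,
`φ_0(u) = 0`, associated with the CIR process with jumps, where
`ψ_t(u) = a(t)u/(1 − 2η²b(t)u)` with `a(t) = exp(−λt)`,
`b(t) = (1 − exp(−λt))/λ`. -/
theorem cir_riccati_phi
    (lam theta eta ell mu T u : ℝ)
    (hlam : 0 < lam) (htheta : 0 ≤ theta) (heta : 0 ≤ eta) (hell : 0 ≤ ell)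
    (hmu : 0 < mu) (hmueta : lam * mu ≠ 2 * eta ^ 2) (hT : 0 < T)
    (hetatheta : 0 < eta ∨ theta = 0)
    (a b ψ φ : ℝ → ℝ)
    (ha : ∀ t, a t = Real.exp (-lam * t))
    (hb : ∀ t, b t = (1 - Real.exp (-lam * t)) / lam)
    (hψ : ∀ t, ψ t = a t * u / (1 - 2 * eta ^ 2 * b t * u))
    (hpos1 : ∀ t ∈ Set.Icc 0 T, 0 < 1 - 2 * eta ^ 2 * b t * u)
    (hpos2 : ∀ t ∈ Set.Icc 0 T,
      0 < lam * (mu * u - 1) /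
        (a t * (lam * mu - 2 * eta ^ 2) * u - lam + 2 * eta ^ 2 * u))
    (hne : ∀ t ∈ Set.Icc 0 T, mu * ψ t ≠ 1)
    (hφ : ∀ t, φ t =
      -(lam * theta / (2 * eta ^ 2)) * Real.log (1 - 2 * eta ^ 2 * b t * u)
      - (ell * mu / (lam * mu - 2 * eta ^ 2)) *
          Real.log (lam * (mu * u - 1) /
            (a t * (lam * mu - 2 * eta ^ 2) * u - lam + 2 * eta ^ 2 * u))) :
    φ 0 = 0 ∧
    ∀ t ∈ Set.Icc 0 T,
      HasDerivAt φ (lam * theta * ψ t + ell * ψ t / (1 / mu - ψ t)) t := by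
  have hlam' : lam ≠ 0 := ne_of_gt hlam
  have hmu' : mu ≠ 0 := ne_of_gt hmu
  have hme : lam * mu - 2 * eta ^ 2 ≠ 0 := sub_ne_zero.mpr hmueta
  constructor
  · rw [hφ 0, hb 0, ha 0]
    have h1 : (-lam * 0 : ℝ) = 0 := by ring
    rw [h1, Real.exp_zero]
    have h2 : ((1:ℝ) - 1) / lam = 0 := by simp
    rw [h2]
    have h3 : (1:ℝ) * (lam*mu - 2*eta^2) * u - lam + 2*eta^2*u = lam*(mu*u-1) := by ring
    rw [h3]
    rcases eq_or_ne (lam*(mu*u-1)) 0 with h|h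
    · simp [h]
    · rw [div_self h]
      simp
  · intro t ht
    have hD := hpos1 t ht
    have hR := hpos2 t ht
    have hne' := hne t ht
    rw [hb t] at hD
    rw [ha t] at hR
    rw [hψ t, ha t, hb t] at hne'
    have hDne : (1 - 2*eta^2*((1 - Real.exp (-lam*t))/lam)*u) ≠ 0 := ne_of_gt hD
    have hGne : (Real.exp (-lam*t)*(lam*mu - 2*eta^2)*u - lam + 2*eta^2*u) ≠ 0 := by
      intro h; rw [h, div_zero] at hR; exact lt_irrefl 0 hR
    have hCne : lam*(mu*u - 1) ≠ 0 := by
      intro h; rw [h, zero_div] at hR; exact lt_irrefl 0 hR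
    have hRne : lam*(mu*u - 1) /
        (Real.exp (-lam*t)*(lam*mu - 2*eta^2)*u - lam + 2*eta^2*u) ≠ 0 := ne_of_gt hR
    have hEd : HasDerivAt (fun s => Real.exp (-lam*s)) (-lam * Real.exp (-lam*t)) t := by
      have h := ((hasDerivAt_id t).const_mul (-lam)).exp
      simpa [mul_comm] using h
    have hbd : HasDerivAt (fun s => (1 - Real.exp (-lam*s))/lam) (Real.exp (-lam*t)) t := by
      have h := ((hasDerivAt_const t (1:ℝ)).sub hEd).div_const lam
      exact h.congr_deriv (by field_simp; ring)
    have hDd : HasDerivAt (fun s => 1 - 2*eta^2*((1 - Real.exp (-lam*s))/lam)*u)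
        (-(2*eta^2*Real.exp (-lam*t)*u)) t := by
      have h := (hasDerivAt_const t (1:ℝ)).sub ((hbd.const_mul (2*eta^2)).mul_const u)
      exact h.congr_deriv (by ring)
    have hGd : HasDerivAt (fun s => Real.exp (-lam*s)*(lam*mu - 2*eta^2)*u - lam + 2*eta^2*u)
        (-lam*Real.exp (-lam*t)*(lam*mu - 2*eta^2)*u) t := by
      have h := (((hEd.mul_const (lam*mu - 2*eta^2)).mul_const u).sub_const lam).add_const
        (2*eta^2*u)
      exact h.congr_deriv (by ring)
    have hlog1 := hDd.log hDne
    have hQd := (hasDerivAt_const t (lam*(mu*u - 1))).div hGd hGne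
    have hlog2 := hQd.log hRne
    have hfd := (hlog1.const_mul (-(lam*theta/(2*eta^2)))).sub
      (hlog2.const_mul (ell*mu/(lam*mu - 2*eta^2)))
    have hφeq : φ = fun s =>
        -(lam*theta/(2*eta^2)) * Real.log (1 - 2*eta^2*((1 - Real.exp (-lam*s))/lam)*u)
        - (ell*mu/(lam*mu - 2*eta^2)) *
            Real.log (lam*(mu*u - 1) /
              (Real.exp (-lam*s)*(lam*mu - 2*eta^2)*u - lam + 2*eta^2*u)) := by
      funext s
      rw [hφ s, ha s, hb s]
    rw [hφeq, hψ t, ha t, hb t]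
    refine hfd.congr_deriv ?_
    simp only [Pi.div_apply]
    clear hfd hlog1 hlog2 hQd hφeq hφ hψ hpos1 hpos2 hne ha hb hEd hbd hDd hGd
    set E := Real.exp (-lam*t) with hEdef
    set D := 1 - 2*eta^2*((1 - E)/lam)*u with hDdef
    set G := E*(lam*mu - 2*eta^2)*u - lam + 2*eta^2*u with hGdef
    set C := lam*(mu*u - 1) with hCdef
    -- key algebraic facts with atoms
    have hB : 1/mu - E*u/D = (D - mu*E*u)/(mu*D) := by
      field_simp
    have hSne : D - mu*E*u ≠ 0 := by
      intro h
      apply hne'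
      rw [← mul_div_assoc, show mu * (E*u) = D by linear_combination -h]
      exact div_self hDne
    have hGS : G = -lam * (D - mu*E*u) := by
      rw [hGdef, hDdef]
      field_simp
      ring
    have hA : (0*G - C*(-lam*E*(lam*mu - 2*eta^2)*u))/G^2 / (C/G)
        = -(-lam*E*(lam*mu - 2*eta^2)*u)/G := by
      field_simp
      ring
    rw [hA, hB, hGS]
    have hlamS : -lam * (D - mu*E*u) ≠ 0 := by
      intro h
      rcases mul_eq_zero.mp h with h'|h'
      · exact hlam' (by linarith [neg_eq_zero.mp h'])
      · exact hSne h'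
    rcases hetatheta with hη | hθ
    · have h2e : (2*eta^2) ≠ 0 := by positivity
      field_simp
      ring
    · subst hθ
      simp only [mul_zero, zero_mul, zero_div, neg_zero, zero_add, zero_sub, mul_zero]
      field_simp
      have hX : mu * lam - 2 * eta ^ 2 ≠ 0 := by rw [mul_comm mu]; exact hme
      rw [div_eq_iff hX]
      ring
end
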